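/- Let Γ be a totally ordered abelian group, K a field, and D = K[x^{Γ_{≥0}}] the semigroup algebra on the nonnegative part of Γ. Then R(D) is a valuation ring of Frac(D) whose value group is Γ, with valuation ν(f/g) = deg(g) − deg(f). -/

import Mathlib

noncomputable def recip (D : Type*) [CommRing D] [IsDomain D] : Subring (FractionRing D) :=
  Subring.closure {x | ∃ d : D, d ≠ 0 ∧ x = (algebraMap D (FractionRing D) d)⁻¹}

instance semigroupAlgebraIsDomain (Γ : Type*) [AddCommGroup Γ] [LinearOrder Γ] [IsOrderedAddMonoid Γ]
    (K : Type*) [Field K] : IsDomain (AddMonoidAlgebra K {x : Γ // 0 ≤ x}) :=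
  NoZeroDivisors.to_isDomain _

/-- The degree (in `Γ`) of a nonzero element of the semigroup algebra `K[x^{Γ₊}]`:
the largest exponent with nonzero coefficient (junk value `0` for `f = 0`). -/
noncomputable def sdeg {Γ : Type*} [AddCommGroup Γ] [LinearOrder Γ] [IsOrderedAddMonoid Γ] {K : Type*} [Field K]
    (f : AddMonoidAlgebra K {x : Γ // 0 ≤ x}) : Γ :=
  ((f.coeff.support.max.unbotD 0 : {x : Γ // 0 ≤ x}) : Γ)

/-!
The degree is additive on nonzero elements and `deg (f + g) ≤ max (deg f) (deg g)`, so
`f ↦ exp (deg f)` is a valuation `v` on `D`; it extends to `Frac D`. The generators `1/d` of `R(D)`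
satisfy `v ≤ 1`, so `R(D)` lies in the valuation ring of `v`. Conversely, if `deg f ≤ deg g`, then
`f/g` is a `K`-combination of the `xᵃ/g` with `a ≤ n := deg g`, and `xᵃ/g = (xᵃ/xⁿ) (xⁿ/g)` where
`xᵃ ∣ xⁿ`; so everything reduces to `xⁿ/g ∈ R(D)`. This holds by induction on the number of terms
of `g`: split off the term `b xᵃ` of least exponent, `g = b xᵃ + h`. Then `xᵃ ∣ g`, so
`xᵃ/g ∈ R(D)`, and `xⁿ/g = (xⁿ/h) (1 - b xᵃ/g)`, where `deg h = n`.
-/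

section Recip

variable {D : Type*} [CommRing D] [IsDomain D]

theorem div_mem_recip_of_dvd {d g : D} (hg : g ≠ 0) (hdg : d ∣ g) :
    algebraMap D (FractionRing D) d / algebraMap D (FractionRing D) g ∈ recip D := by
  obtain ⟨e, rfl⟩ := hdg
  rw [map_mul, div_mul_cancel_left₀ (IsFractionRing.to_map_eq_zero_iff.not.mpr
    (left_ne_zero_of_mul hg))]
  exact Subring.subset_closure ⟨e, right_ne_zero_of_mul hg, rfl⟩

theorem algebraMap_mem_recip_of_isUnit {u : D} (hu : IsUnit u) :
    algebraMap D (FractionRing D) u ∈ recip D := by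
  simpa using div_mem_recip_of_dvd one_ne_zero hu.dvd

theorem algebraMap_algebraMap_mem_recip {K : Type*} [Field K] [Algebra K D] (c : K) :
    algebraMap D (FractionRing D) (algebraMap K D c) ∈ recip D := by
  rcases eq_or_ne c 0 with rfl | hc
  · simp
  · exact algebraMap_mem_recip_of_isUnit ((isUnit_iff_ne_zero.mpr hc).map _)

end Recip

instance Nonneg.existsAddOfLE_of_addCommGroup {α : Type*} [AddCommGroup α] [PartialOrder α]
    [IsOrderedAddMonoid α] : ExistsAddOfLE {x : α // 0 ≤ x} where
  exists_add_of_le {a b} h :=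
    ⟨⟨b - a, sub_nonneg.mpr h⟩, Subtype.ext (add_sub_cancel (a : α) b).symm⟩

namespace AddMonoidAlgebra

theorem single_eq_algebraMap_mul_of' {k G : Type*} [CommSemiring k] [AddMonoid G] (a : G) (c : k) :
    single a c = algebraMap k k[G] c * of' k G a := by
  rw [coe_algebraMap, Function.comp_apply, of'_apply, single_mul_single, zero_add, mul_one]; rfl

theorem of'_dvd_of_forall_le {k G : Type*} [Semiring k] [AddCancelCommMonoid G] [LE G]
    [ExistsAddOfLE G] {x : k[G]} {m : G} (h : ∀ a ∈ x.coeff.support, m ≤ a) :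
    of' k G m ∣ x := by
  refine of'_dvd_iff_modOf_eq_zero.mpr ?_
  ext a
  by_cases ha : ∃ d, a = m + d
  · exact coeff_modOf_of_exists_add x m a ha
  · rw [coeff_modOf_of_not_exists_add x m a ha]
    by_contra hx
    exact ha (exists_add_of_le (h a (Finsupp.mem_support_iff.mpr hx)))

end AddMonoidAlgebra

section NonnegSemigroupAlgebra

open AddMonoidAlgebra WithZero

variable {Γ : Type*} [AddCommGroup Γ] [LinearOrder Γ] [IsOrderedAddMonoid Γ] {K : Type*} [Field K]

local notation:max G "₊" => {x : G // 0 ≤ x}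

variable {f g : K[Γ₊]}

theorem sdeg_eq_supDegree (f : K[Γ₊]) : sdeg f = ↑(f.supDegree id) := by
  rcases f.coeff.support.eq_empty_or_nonempty with h | h
  · simp only [sdeg, supDegree, h, Finset.max_empty, Finset.sup_empty]; rfl
  · rw [sdeg, ← Finset.coe_max' h, WithBot.unbotD_coe, Finset.max'_eq_sup', Finset.sup'_eq_sup]
    rfl

theorem sdeg_nonneg (f : K[Γ₊]) : 0 ≤ sdeg f :=
  (f.coeff.support.max.unbotD 0).2

theorem sdeg_le_sdeg_iff_supDegree_le : sdeg f ≤ sdeg g ↔ f.supDegree id ≤ g.supDegree id := by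
  rw [sdeg_eq_supDegree, sdeg_eq_supDegree, Subtype.coe_le_coe]

theorem sdeg_add_le (f g : K[Γ₊]) : sdeg (f + g) ≤ max (sdeg f) (sdeg g) := by
  simp only [sdeg_eq_supDegree, le_max_iff, Subtype.coe_le_coe]
  exact le_sup_iff.mp supDegree_add_le

theorem sdeg_mul (hf : f ≠ 0) (hg : g ≠ 0) : sdeg (f * g) = sdeg f + sdeg g := by
  simp only [sdeg_eq_supDegree]
  refine congrArg Subtype.val (supDegree_mul Function.injective_id (fun _ _ => rfl) ?_ hf hg)
  exact mul_ne_zero ((leadingCoeff_ne_zero Function.injective_id).mpr hf)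
    ((leadingCoeff_ne_zero Function.injective_id).mpr hg)

theorem sdeg_single (a : Γ₊) {c : K} (hc : c ≠ 0) : sdeg (single a c) = a := by
  rw [sdeg_eq_supDegree, supDegree_single_ne_zero a hc, id]

open Classical in
noncomputable def degValuation : Valuation K[Γ₊] Γᵐ⁰ where
  toFun f := if f = 0 then 0 else exp (sdeg f)
  map_zero' := if_pos rfl
  map_one' := by rw [if_neg one_ne_zero, one_def, sdeg_single 0 one_ne_zero]; rfl
  map_mul' f g := by
    by_cases hf : f = 0
    · simp [hf]
    by_cases hg : g = 0
    · simp [hg]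
    simp [hf, hg, sdeg_mul hf hg, exp_add]
  map_add_le_max' f g := by
    by_cases hfg : f + g = 0
    · simp [hfg]
    by_cases hf : f = 0
    · simp [hf]
    by_cases hg : g = 0
    · simp [hg]
    simpa [hf, hg, hfg] using sdeg_add_le f g

theorem degValuation_of_ne_zero (hf : f ≠ 0) : degValuation f = exp (sdeg f) := if_neg hf

noncomputable def fracDegValuation : Valuation (FractionRing K[Γ₊]) Γᵐ⁰ :=
  degValuation.extendToLocalization (S := nonZeroDivisors K[Γ₊])
    (fun _ hd => by
      simp [Valuation.mem_supp_iff, degValuation_of_ne_zero (nonZeroDivisors.ne_zero hd)]) _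

theorem fracDegValuation_algebraMap (hf : f ≠ 0) :
    fracDegValuation (algebraMap _ (FractionRing K[Γ₊]) f) = exp (sdeg f) := by
  rw [fracDegValuation, Valuation.extendToLocalization_apply_map_apply, degValuation_of_ne_zero hf]

theorem fracDegValuation_div (hf : f ≠ 0) (hg : g ≠ 0) :
    fracDegValuation (algebraMap _ (FractionRing K[Γ₊]) f / algebraMap _ _ g) =
      exp (sdeg f - sdeg g) := by
  rw [map_div₀, fracDegValuation_algebraMap hf, fracDegValuation_algebraMap hg, exp_sub]

theorem of'_supDegree_div_single_add_mem_recip {a : Γ₊} {b : K} (hb : b ≠ 0) (h : K[Γ₊])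
    (ha : ∀ c ∈ h.coeff.support, a < c)
    (ih : h ≠ 0 → algebraMap _ (FractionRing K[Γ₊]) (of' K Γ₊ (h.supDegree id)) /
      algebraMap _ _ h ∈ recip K[Γ₊]) :
    algebraMap _ (FractionRing K[Γ₊]) (of' K Γ₊ ((single a b + h).supDegree id)) /
      algebraMap _ _ (single a b + h) ∈ recip K[Γ₊] := by
  set ι := algebraMap K[Γ₊] (FractionRing K[Γ₊])
  have hι {p : K[Γ₊]} (hp : p ≠ 0) : ι p ≠ 0 := IsFractionRing.to_map_eq_zero_iff.not.mpr hp
  have hha : h.coeff a = 0 := Finsupp.notMem_support_iff.mp fun hm => (ha a hm).false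
  have hg : single a b + h ≠ 0 := fun h0 => hb (by simpa [hha] using congrArg (·.coeff a) h0)
  have hmin : ι (of' K Γ₊ a) / ι (single a b + h) ∈ recip K[Γ₊] := by
    refine div_mem_recip_of_dvd hg (of'_dvd_of_forall_le fun c hc => ?_)
    rcases Finset.mem_union.mp (Finsupp.support_add (by simpa using hc)) with hc | hc
    · exact (Finset.mem_singleton.mp (Finsupp.support_single_subset hc)).ge
    · exact (ha c hc).le
  rcases eq_or_ne h 0 with rfl | hh
  · simpa [supDegree_single_ne_zero a hb] using hmin
  have hdeg : (single a b + h).supDegree id = h.supDegree id := by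
    refine supDegree_add_eq_right ?_
    obtain ⟨c, hc⟩ := Finsupp.support_nonempty_iff.mpr (coeff_eq_zero.not.mpr hh)
    rw [supDegree_single_ne_zero a hb]
    exact (ha c hc).trans_le (Finset.le_sup (f := id) hc)
  have hquot : ι h / ι (single a b + h) =
      1 - ι (algebraMap K K[Γ₊] b) * (ι (of' K Γ₊ a) / ι (single a b + h)) := by
    rw [eq_sub_iff_add_eq, ← mul_div_assoc, ← add_div, ← map_mul, ← single_eq_algebraMap_mul_of',
      ← map_add, add_comm, div_self (hι hg)]
  rw [hdeg, ← div_mul_div_cancel₀ (hι hh), hquot]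
  exact mul_mem (ih hh) (sub_mem (one_mem _) (mul_mem (algebraMap_algebraMap_mem_recip b) hmin))

theorem of'_supDegree_div_mem_recip (hg : g ≠ 0) :
    algebraMap _ (FractionRing K[Γ₊]) (of' K Γ₊ (g.supDegree id)) / algebraMap _ _ g ∈
      recip K[Γ₊] := by
  obtain ⟨φ, rfl⟩ : ∃ φ, g = ofCoeff φ := ⟨g.coeff, rfl⟩
  induction φ using Finsupp.induction_on_min with
  | zero => exact absurd rfl hg
  | single_add a b φ ha hb ih => exact of'_supDegree_div_single_add_mem_recip hb (ofCoeff φ) ha ih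

theorem single_div_mem_recip_of_le {a : Γ₊} (c : K) (hg : g ≠ 0) (ha : a ≤ g.supDegree id) :
    algebraMap _ (FractionRing K[Γ₊]) (single a c) / algebraMap _ _ g ∈ recip K[Γ₊] := by
  obtain ⟨d, hd⟩ := exists_add_of_le ha
  have hdvd : of' K Γ₊ a ∣ of' K Γ₊ (g.supDegree id) :=
    ⟨of' K Γ₊ d, by rw [hd, of'_apply, of'_apply, of'_apply, single_mul_single, mul_one]⟩
  have hn : of' K Γ₊ (g.supDegree id) ≠ 0 := single_eq_zero.not.mpr one_ne_zero
  rw [single_eq_algebraMap_mul_of', map_mul, mul_div_assoc,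
    ← div_mul_div_cancel₀ (IsFractionRing.to_map_eq_zero_iff.not.mpr hn)]
  exact mul_mem (algebraMap_algebraMap_mem_recip c)
    (mul_mem (div_mem_recip_of_dvd hn hdvd) (of'_supDegree_div_mem_recip hg))

theorem div_mem_recip_of_sdeg_le (hg : g ≠ 0) (h : sdeg f ≤ sdeg g) :
    algebraMap _ (FractionRing K[Γ₊]) f / algebraMap _ _ g ∈ recip K[Γ₊] := by
  rw [← sum_coeff_single f, Finsupp.sum, map_sum, Finset.sum_div]
  exact sum_mem fun a ha => single_div_mem_recip_of_le _ hg
    ((Finset.le_sup (f := id) ha).trans (sdeg_le_sdeg_iff_supDegree_le.mp h))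

theorem recip_eq_valuationSubring :
    recip K[Γ₊] = (fracDegValuation (K := K) (Γ := Γ)).valuationSubring.toSubring := by
  refine le_antisymm (Subring.closure_le.mpr ?_) fun x hx => ?_
  · rintro _ ⟨d, hd, rfl⟩
    rw [SetLike.mem_coe, ValuationSubring.mem_toSubring, Valuation.mem_valuationSubring_iff,
      map_inv₀, fracDegValuation_algebraMap hd, ← exp_neg, ← exp_zero, exp_le_exp, neg_nonpos]
    exact sdeg_nonneg d
  · obtain ⟨f, g, hg, rfl⟩ := IsFractionRing.div_surjective K[Γ₊] x
    rcases eq_or_ne f 0 with rfl | hf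
    · simp
    replace hg := nonZeroDivisors.ne_zero hg
    rw [ValuationSubring.mem_toSubring, Valuation.mem_valuationSubring_iff,
      fracDegValuation_div hf hg, ← exp_zero, exp_le_exp, sub_nonpos] at hx
    exact div_mem_recip_of_sdeg_le hg hx

theorem exists_fracDegValuation_eq_exp (γ : Γ) :
    ∃ x : FractionRing K[Γ₊], fracDegValuation x = exp γ := by
  have hne (a : Γ₊) : of' K Γ₊ a ≠ 0 := single_eq_zero.not.mpr one_ne_zero
  refine ⟨algebraMap _ _ (of' K Γ₊ ⟨γ⁺, posPart_nonneg γ⟩) /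
    algebraMap _ _ (of' K Γ₊ ⟨γ⁻, negPart_nonneg γ⟩), ?_⟩
  rw [fracDegValuation_div (hne _) (hne _), of'_apply, of'_apply, sdeg_single _ one_ne_zero,
    sdeg_single _ one_ne_zero, posPart_sub_negPart]

/-- The valuation written additively, `ν = -log v`, so that `R(D) = {ν ≥ 0}`. -/
noncomputable def degUnitsHom : (FractionRing K[Γ₊])ˣ →* Multiplicative Γ where
  toFun u := Multiplicative.ofAdd (-log (fracDegValuation (u : FractionRing K[Γ₊])))
  map_one' := by simp
  map_mul' u v := by
    rw [Units.val_mul, map_mul, log_mul (fracDegValuation.ne_zero_iff.mpr u.ne_zero)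
      (fracDegValuation.ne_zero_iff.mpr v.ne_zero), neg_add, ofAdd_add]

theorem toAdd_degUnitsHom (u : (FractionRing K[Γ₊])ˣ) :
    Multiplicative.toAdd (degUnitsHom u) = -log (fracDegValuation (u : FractionRing K[Γ₊])) :=
  rfl

theorem degUnitsHom_surjective : Function.Surjective (degUnitsHom (K := K) (Γ := Γ)) := by
  intro m
  obtain ⟨x, hx⟩ := exists_fracDegValuation_eq_exp (K := K) (-Multiplicative.toAdd m)
  refine ⟨Units.mk0 x (fracDegValuation.ne_zero_iff.mp (hx ▸ exp_ne_zero)), ?_⟩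
  apply Multiplicative.toAdd.injective
  rw [toAdd_degUnitsHom, Units.val_mk0, hx, log_exp, neg_neg]

theorem nonneg_toAdd_degUnitsHom_iff (u : (FractionRing K[Γ₊])ˣ) :
    0 ≤ Multiplicative.toAdd (degUnitsHom u) ↔ fracDegValuation (u : FractionRing K[Γ₊]) ≤ 1 := by
  rw [toAdd_degUnitsHom, neg_nonneg,
    ← log_le_log (fracDegValuation.ne_zero_iff.mpr u.ne_zero) one_ne_zero, log_one]

theorem toAdd_degUnitsHom_of_eq_div {u : (FractionRing K[Γ₊])ˣ} (hf : f ≠ 0) (hg : g ≠ 0)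
    (hu : (u : FractionRing K[Γ₊]) = algebraMap _ _ f / algebraMap _ _ g) :
    Multiplicative.toAdd (degUnitsHom u) = sdeg g - sdeg f := by
  rw [toAdd_degUnitsHom, hu, fracDegValuation_div hf hg, log_exp, neg_sub]

end NonnegSemigroupAlgebra

/-- For `D = K[x^{Γ₊}]`, `R(D)` is a valuation ring of `Frac D` with
value group `Γ`, the valuation being `ν(f/g) = deg g − deg f`.  Concretely: there is a
surjective group homomorphism `ν : Frac(D)ˣ →* Γ` (written multiplicatively) such that a
unit lies in `R(D)` iff its value is `≥ 0`, and `ν(f/g) = deg g − deg f` for nonzero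
`f, g ∈ D`; moreover for every nonzero `x`, `x ∈ R(D)` or `x⁻¹ ∈ R(D)`. -/
theorem stmt_6 (Γ : Type*) [AddCommGroup Γ] [LinearOrder Γ] [IsOrderedAddMonoid Γ] (K : Type*) [Field K] :
    letI D := AddMonoidAlgebra K {x : Γ // 0 ≤ x}
    letI F := FractionRing D
    (∀ x : F, x ≠ 0 → x ∈ recip D ∨ x⁻¹ ∈ recip D) ∧
    ∃ ν : Fˣ →* Multiplicative Γ, Function.Surjective ν ∧
      (∀ u : Fˣ, (u : F) ∈ recip D ↔ 0 ≤ Multiplicative.toAdd (ν u)) ∧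
      (∀ (u : Fˣ) (f g : D), f ≠ 0 → g ≠ 0 →
        (u : F) = algebraMap D F f / algebraMap D F g →
        Multiplicative.toAdd (ν u) = sdeg g - sdeg f) := by
  rw [recip_eq_valuationSubring]
  exact ⟨fun x _ => fracDegValuation.valuationSubring.mem_or_inv_mem x, degUnitsHom,
    degUnitsHom_surjective, fun u => (nonneg_toAdd_degUnitsHom_iff u).symm,
    fun _ _ _ hf hg hu => toAdd_degUnitsHom_of_eq_div hf hg hu⟩
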